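/- Let n ≥ 2, K > 0, and let A be an n×n random matrix with mutually independent complex entries a_ij satisfying E|a_ij|² ≤ K for all i, j. Suppose there exist indices i₀, j₀ with P(a_{i₀j₀} = 0) = P > 0. Then there is a constant C > 0 depending only on P and K such that for every λ > 0 and every t > 0 there exists a deterministic matrix M ∈ ℂ^{n×n} with ‖M‖_op = t and P[ σ_n(M + λA) ≤ C·λ²·n^{3/2}/t ] ≥ 0.99·P. -/

import Mathlib

open MeasureTheory ProbabilityTheory

/-- The least singular value `σ_n(M) = inf_{‖x‖₂ = 1} ‖Mx‖₂`. -/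
noncomputable def lsv {n : ℕ} (M : Matrix (Fin n) (Fin n) ℂ) : ℝ :=
  ⨅ x : Metric.sphere (0 : EuclideanSpace ℂ (Fin n)) 1,
    ‖(WithLp.equiv 2 (Fin n → ℂ)).symm (M.mulVec ((WithLp.equiv 2 (Fin n → ℂ)) x.1))‖

/-- The operator norm `‖M‖_op = sup_{‖x‖₂ = 1} ‖Mx‖₂`. -/
noncomputable def opNorm {n : ℕ} (M : Matrix (Fin n) (Fin n) ℂ) : ℝ :=
  ⨆ x : Metric.sphere (0 : EuclideanSpace ℂ (Fin n)) 1,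
    ‖(WithLp.equiv 2 (Fin n → ℂ)).symm (M.mulVec ((WithLp.equiv 2 (Fin n → ℂ)) x.1))‖

/-!
Take `M = t • P D`, where `P` permutes coordinates by the transposition `σ = (i₀ j₀)` and `D`
kills the coordinate `j₀`; then `‖M‖ = t`, and `M` maps the coordinates `j ≠ j₀` isometrically
(up to the factor `t`) onto the coordinates `i ≠ i₀`. When `a i₀ j₀ = 0`, the column `λ A e_{j₀}`
therefore lies in the range of `M` and can be cancelled: for `δ = -(λ/t) (A e_{j₀}) ∘ σ` the vector
`x = e_{j₀} + δ` has `‖x‖ ≥ 1` and `(M + λA) x = λ A δ`, so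
`σ_n(M + λA) ≤ λ²/t · ‖A e_{j₀}‖ · ‖A‖_F`. With `c² = 200 K / P`, Markov's inequality bounds
the probabilities that `‖A e_{j₀}‖ ≥ c √n` or `‖A‖_F ≥ c n` by `P / 200` each, and on the
remaining part of the event `a i₀ j₀ = 0` the bound reads `σ_n(M + λA) ≤ c² λ² n^{3/2} / t`.
-/

open scoped Matrix
open WithLp

lemma lsv_nonneg {n : ℕ} (B : Matrix (Fin n) (Fin n) ℂ) : 0 ≤ lsv B :=
  Real.iInf_nonneg fun _ => norm_nonneg _

lemma lsv_mul_norm_le {n : ℕ} (B : Matrix (Fin n) (Fin n) ℂ) (v : Fin n → ℂ) :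
    lsv B * ‖toLp 2 v‖ ≤ ‖toLp 2 (B *ᵥ v)‖ := by
  rcases eq_or_ne v 0 with rfl | hv
  · simp
  have hv' : 0 < ‖toLp 2 v‖ := by simpa using hv
  let u : Metric.sphere (0 : EuclideanSpace ℂ (Fin n)) 1 :=
    ⟨‖toLp 2 v‖⁻¹ • toLp 2 v, by simp [norm_smul, hv'.ne']⟩
  have h : lsv B ≤ ‖toLp 2 (B *ᵥ ofLp u.1)‖ :=
    ciInf_le ⟨0, by rintro r ⟨y, rfl⟩; exact norm_nonneg _⟩ u
  have hu : ‖toLp 2 (B *ᵥ ofLp u.1)‖ = ‖toLp 2 v‖⁻¹ * ‖toLp 2 (B *ᵥ v)‖ := by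
    simp only [u, WithLp.ofLp_smul, Matrix.mulVec_smul, WithLp.toLp_smul, norm_smul]
    simp
  rw [← le_div_iff₀ hv', div_eq_inv_mul, ← hu]
  exact h

open scoped Matrix.Norms.L2Operator in
lemma opNorm_eq_l2_opNorm {n : ℕ} (M : Matrix (Fin n) (Fin n) ℂ) : opNorm M = ‖M‖ := by
  rw [← Matrix.l2_opNorm_toEuclideanCLM, ← ContinuousLinearMap.sSup_sphere_eq_norm, sSup_image']
  rfl

section
variable {𝕜 ι : Type*} [RCLike 𝕜] [Fintype ι] [DecidableEq ι]

noncomputable def scaledPartialPerm (t : ℝ) (i₀ j₀ : ι) : Matrix ι ι 𝕜 :=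
  (t : 𝕜) • ((Equiv.swap i₀ j₀).permMatrix 𝕜 * Matrix.diagonal (Function.update 1 j₀ 0))

lemma scaledPartialPerm_mulVec (t : ℝ) (i₀ j₀ : ι) (v : ι → 𝕜) :
    scaledPartialPerm t i₀ j₀ *ᵥ v = (t : 𝕜) • (Function.update v j₀ 0 ∘ Equiv.swap i₀ j₀) := by
  have hD : Matrix.diagonal (Function.update 1 j₀ 0) *ᵥ v = Function.update v j₀ 0 := by
    ext j
    rcases eq_or_ne j j₀ with rfl | hj <;> simp [Matrix.mulVec_diagonal, *]
  rw [scaledPartialPerm, Matrix.smul_mulVec, ← Matrix.mulVec_mulVec, hD, Matrix.permMatrix_mulVec]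

open scoped Matrix.Norms.L2Operator in
lemma l2_opNorm_scaledPartialPerm [Nontrivial ι] {t : ℝ} (ht : 0 ≤ t) (i₀ j₀ : ι) :
    ‖(scaledPartialPerm t i₀ j₀ : Matrix ι ι 𝕜)‖ = t := by
  apply le_antisymm
  · have hD : ‖(Function.update 1 j₀ 0 : ι → 𝕜)‖ ≤ 1 :=
      pi_norm_le_iff_of_nonneg zero_le_one |>.mpr fun j => by
        rcases eq_or_ne j j₀ with rfl | hj <;> simp [*]
    calc ‖(scaledPartialPerm t i₀ j₀ : Matrix ι ι 𝕜)‖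
        ≤ ‖(t : 𝕜)‖ * (‖(Equiv.swap i₀ j₀).permMatrix 𝕜‖ *
            ‖Matrix.diagonal (Function.update 1 j₀ 0 : ι → 𝕜)‖) := by
          grw [scaledPartialPerm, norm_smul_le, Matrix.l2_opNorm_mul]
      _ ≤ t * (1 * 1) := by
          grw [Matrix.permMatrix_l2_opNorm_le, Matrix.l2_opNorm_diagonal, hD]
          simp [abs_of_nonneg ht]
      _ = t := by ring
  · obtain ⟨j₁, hj₁⟩ := exists_ne j₀
    set e : ι → 𝕜 := Pi.single j₁ 1
    have hentry : (scaledPartialPerm t i₀ j₀ *ᵥ e) (Equiv.swap i₀ j₀ j₁) = t := by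
      rw [scaledPartialPerm_mulVec]
      simp [e, hj₁]
    have hop : ‖toLp 2 (scaledPartialPerm t i₀ j₀ *ᵥ e)‖ ≤
        ‖(scaledPartialPerm t i₀ j₀ : Matrix ι ι 𝕜)‖ := by
      simpa [e] using Matrix.l2_opNorm_mulVec (scaledPartialPerm t i₀ j₀ : Matrix ι ι 𝕜)
        (toLp 2 e)
    calc t = ‖toLp 2 (scaledPartialPerm t i₀ j₀ *ᵥ e) (Equiv.swap i₀ j₀ j₁)‖ := by
          simp [hentry, abs_of_nonneg ht]
      _ ≤ ‖toLp 2 (scaledPartialPerm t i₀ j₀ *ᵥ e)‖ := PiLp.norm_apply_le _ _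
      _ ≤ _ := hop

lemma scaledPartialPerm_add_smul_mulVec {t : ℝ} (ht : t ≠ 0) (l : ℝ) {i₀ j₀ : ι}
    {A : Matrix ι ι 𝕜} (hA : A i₀ j₀ = 0) :
    let δ : ι → 𝕜 := (-(l / t : ℝ) : 𝕜) • (Aᵀ j₀ ∘ Equiv.swap i₀ j₀)
    (scaledPartialPerm t i₀ j₀ + l • A) *ᵥ (Pi.single j₀ 1 + δ) = l • (A *ᵥ δ) := by
  intro δ
  have hδ : Function.update (Pi.single j₀ 1 + δ) j₀ 0 = δ := by
    ext j
    rcases eq_or_ne j j₀ with rfl | hj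
    · simp [δ, hA]
    · simp [hj]
  have hM : scaledPartialPerm t i₀ j₀ *ᵥ (Pi.single j₀ 1 + δ) = -(l : 𝕜) • Aᵀ j₀ := by
    ext i
    rw [scaledPartialPerm_mulVec, hδ]
    have ht' : (t : 𝕜) ≠ 0 := RCLike.ofReal_ne_zero.mpr ht
    simp only [neg_smul, map_div₀, Pi.smul_apply, Function.comp_apply, Pi.neg_apply,
      Equiv.swap_apply_self, Matrix.transpose_apply, smul_eq_mul, mul_neg, neg_mul, neg_inj, δ]
    field_simp
  rw [Matrix.add_mulVec, hM, Matrix.smul_mulVec, Matrix.mulVec_add, Matrix.mulVec_single_one]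
  ext i
  simp
end

open scoped Matrix.Norms.Frobenius in
lemma norm_toLp_mulVec_le_frobenius {𝕜 m n : Type*} [RCLike 𝕜] [Fintype m] [Fintype n]
    (A : Matrix m n 𝕜) (v : n → 𝕜) : ‖toLp 2 (A *ᵥ v)‖ ≤ ‖A‖ * ‖toLp 2 v‖ := by
  rw [← Matrix.frobenius_norm_replicateCol (ι := Unit),
    ← Matrix.frobenius_norm_replicateCol (ι := Unit), Matrix.replicateCol_mulVec]
  exact Matrix.frobenius_norm_mul _ _

open scoped Matrix.Norms.Frobenius in
lemma frobenius_norm_eq_norm_toLp_uncurry {E m n : Type*} [NormedAddCommGroup E] [Fintype m]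
    [Fintype n] (A : Matrix m n E) : ‖A‖ = ‖toLp 2 (fun q : m × n => A q.1 q.2)‖ := by
  change ‖toLp 2 fun i => toLp 2 fun j => A i j‖ = _
  rw [← sq_eq_sq₀ (norm_nonneg _) (norm_nonneg _)]
  simp [PiLp.norm_sq_eq_of_L2, Fintype.sum_prod_type]

lemma measure_le_norm_toLp_le {Ω ι E : Type*} [MeasurableSpace Ω] {μ : Measure Ω} [Fintype ι]
    [NormedAddCommGroup E] {f : ι → Ω → E} (hf : ∀ k, AEStronglyMeasurable (f k) μ) {K : ℝ}
    (hK : ∀ k, ∫⁻ ω, ‖f k ω‖ₑ ^ 2 ∂μ ≤ ENNReal.ofReal K) {s : ℝ} (hs : 0 < s) :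
    μ {ω | s ≤ ‖toLp 2 (fun k => f k ω)‖} ≤ ENNReal.ofReal (Fintype.card ι * K / s ^ 2) := by
  have hsub : {ω | s ≤ ‖toLp 2 (fun k => f k ω)‖} ⊆
      {ω | ENNReal.ofReal (s ^ 2) ≤ ∑ k, ‖f k ω‖ₑ ^ 2} := by
    intro ω hω
    have h : s ^ 2 ≤ ∑ k, ‖f k ω‖ ^ 2 := by
      calc s ^ 2 ≤ ‖toLp 2 (fun k => f k ω)‖ ^ 2 := by gcongr; exact hω
        _ = ∑ k, ‖f k ω‖ ^ 2 := by simp [PiLp.norm_sq_eq_of_L2]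
    simp only [Set.mem_ofPred_eq]
    grw [h, ENNReal.ofReal_sum_of_nonneg fun _ _ => by positivity]
    simp [ENNReal.ofReal_pow, ofReal_norm]
  have hint : ∫⁻ ω, ∑ k, ‖f k ω‖ₑ ^ 2 ∂μ ≤ Fintype.card ι * ENNReal.ofReal K := by
    rw [lintegral_finsetSum' _ fun k _ => ((hf k).enorm).pow_const 2]
    simpa using Finset.sum_le_sum fun k (_ : k ∈ Finset.univ) => hK k
  calc μ {ω | s ≤ ‖toLp 2 (fun k => f k ω)‖}
      ≤ (∫⁻ ω, ∑ k, ‖f k ω‖ₑ ^ 2 ∂μ) / ENNReal.ofReal (s ^ 2) :=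
        (measure_mono hsub).trans <| meas_ge_le_lintegral_div
          (Finset.aemeasurable_fun_sum _ fun k _ => ((hf k).enorm).pow_const 2)
          (ENNReal.ofReal_pos.mpr (pow_pos hs 2)).ne' ENNReal.ofReal_ne_top
    _ ≤ Fintype.card ι * ENNReal.ofReal K / ENNReal.ofReal (s ^ 2) := by gcongr
    _ = ENNReal.ofReal (Fintype.card ι * K / s ^ 2) := by
        rw [ENNReal.ofReal_div_of_pos (pow_pos hs 2), ENNReal.ofReal_mul (by positivity)]
        simp

lemma ofReal_sub_sub_le_measure_sdiff_union {Ω : Type*} [MeasurableSpace Ω] {μ : Measure Ω}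
    {s t₁ t₂ : Set Ω} {p q₁ q₂ : ℝ} (hs : μ s = ENNReal.ofReal p) (hq₁ : 0 ≤ q₁) (hq₂ : 0 ≤ q₂)
    (ht₁ : μ t₁ ≤ ENNReal.ofReal q₁) (ht₂ : μ t₂ ≤ ENNReal.ofReal q₂) :
    ENNReal.ofReal (p - q₁ - q₂) ≤ μ (s \ (t₁ ∪ t₂)) :=
  calc ENNReal.ofReal (p - q₁ - q₂)
      ≤ ENNReal.ofReal p - ENNReal.ofReal q₁ - ENNReal.ofReal q₂ := by
        rw [ENNReal.ofReal_sub _ hq₂, ENNReal.ofReal_sub _ hq₁]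
    _ ≤ μ s - μ t₁ - μ t₂ := by rw [hs]; gcongr
    _ = μ s - (μ t₁ + μ t₂) := tsub_tsub _ _ _
    _ ≤ μ s - μ (t₁ ∪ t₂) := tsub_le_tsub_left (measure_union_le _ _) _
    _ ≤ μ (s \ (t₁ ∪ t₂)) := le_measure_sdiff

open scoped Matrix.Norms.Frobenius in
lemma lsv_scaledPartialPerm_add_smul_le {n : ℕ} {t : ℝ} (ht : 0 < t) (l : ℝ) {i₀ j₀ : Fin n}
    {A : Matrix (Fin n) (Fin n) ℂ} (hA : A i₀ j₀ = 0) :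
    lsv (scaledPartialPerm t i₀ j₀ + l • A) ≤ l ^ 2 / t * ‖toLp 2 (Aᵀ j₀)‖ * ‖A‖ := by
  set δ : Fin n → ℂ := (-(l / t : ℝ) : ℂ) • (Aᵀ j₀ ∘ Equiv.swap i₀ j₀)
  have hx : 1 ≤ ‖toLp 2 (Pi.single j₀ 1 + δ)‖ := by
    have h := PiLp.norm_apply_le (toLp 2 (Pi.single j₀ 1 + δ)) j₀
    simpa [δ, hA] using h
  have hδ : ‖toLp 2 δ‖ = |l| / t * ‖toLp 2 (Aᵀ j₀)‖ := by
    have hσ : ‖toLp 2 (Aᵀ j₀ ∘ Equiv.swap i₀ j₀)‖ = ‖toLp 2 (Aᵀ j₀)‖ := by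
      simp only [EuclideanSpace.norm_eq, Function.comp_apply,
        Equiv.sum_comp (Equiv.swap i₀ j₀) fun i => ‖Aᵀ j₀ i‖ ^ 2]
    rw [WithLp.toLp_smul, norm_smul, hσ]
    simp [abs_of_pos ht]
  calc lsv (scaledPartialPerm t i₀ j₀ + l • A)
      ≤ lsv (scaledPartialPerm t i₀ j₀ + l • A) * ‖toLp 2 (Pi.single j₀ 1 + δ)‖ :=
        le_mul_of_one_le_right (lsv_nonneg _) hx
    _ ≤ ‖toLp 2 ((scaledPartialPerm t i₀ j₀ + l • A) *ᵥ (Pi.single j₀ 1 + δ))‖ :=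
        lsv_mul_norm_le _ _
    _ = |l| * ‖toLp 2 (A *ᵥ δ)‖ := by
        rw [show (scaledPartialPerm t i₀ j₀ + l • A) *ᵥ (Pi.single j₀ 1 + δ) = l • (A *ᵥ δ) from
          scaledPartialPerm_add_smul_mulVec ht.ne' l hA, WithLp.toLp_smul, norm_smul,
          Real.norm_eq_abs]
    _ ≤ |l| * (‖A‖ * ‖toLp 2 δ‖) := by grw [norm_toLp_mulVec_le_frobenius]
    _ = l ^ 2 / t * ‖toLp 2 (Aᵀ j₀)‖ * ‖A‖ := by
        rw [hδ, ← sq_abs l]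
        ring

lemma lsv_scaledPartialPerm_add_smul_le_rpow {n : ℕ} {t c : ℝ} (ht : 0 < t) (l : ℝ)
    {i₀ j₀ : Fin n} {A : Matrix (Fin n) (Fin n) ℂ} (hA : A i₀ j₀ = 0)
    (hcol : ‖toLp 2 (Aᵀ j₀)‖ ≤ c * √n)
    (hentries : ‖toLp 2 (fun q : Fin n × Fin n => A q.1 q.2)‖ ≤ c * n) :
    lsv (scaledPartialPerm t i₀ j₀ + l • A) ≤ c ^ 2 * l ^ 2 * (n : ℝ) ^ (3 / 2 : ℝ) / t := by
  have hn : (n : ℝ) ^ (3 / 2 : ℝ) = n * √n := by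
    rw [show (3 / 2 : ℝ) = 1 + 1 / 2 by norm_num, Real.rpow_add' (Nat.cast_nonneg n) (by norm_num),
      Real.rpow_one, Real.sqrt_eq_rpow]
  have hc : 0 ≤ c * √n := (norm_nonneg _).trans hcol
  calc lsv (scaledPartialPerm t i₀ j₀ + l • A)
      ≤ l ^ 2 / t * ‖toLp 2 (Aᵀ j₀)‖ * ‖toLp 2 (fun q : Fin n × Fin n => A q.1 q.2)‖ := by
        have h := lsv_scaledPartialPerm_add_smul_le ht l hA
        rwa [frobenius_norm_eq_norm_toLp_uncurry] at h
    _ ≤ l ^ 2 / t * (c * √n) * (c * n) := by gcongr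
    _ = c ^ 2 * l ^ 2 * (n : ℝ) ^ (3 / 2 : ℝ) / t := by rw [hn]; ring

/-- Theorem `shift`. Let `n ≥ 2`, `K > 0`, and let `A` be an `n × n`
random matrix with mutually independent complex entries `a i j` with `E|a i j|² ≤ K`.
Suppose `P(a i₀ j₀ = 0) = P > 0` for some entry. Then there is a constant `C > 0` depending
only on `P` and `K` such that for every `λ > 0` and `t > 0` there is a deterministic matrix
`M` with `‖M‖_op = t` and `P[σ_n(M + λA) ≤ C λ² n^(3/2)/t] ≥ 0.99·P`. -/
theorem stmt16 (P K : ℝ) (hP : 0 < P) (hK : 0 < K) :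
    ∃ C > (0 : ℝ),
      ∀ (n : ℕ), 2 ≤ n →
      ∀ (Ω : Type) [MeasureSpace Ω], IsProbabilityMeasure (ℙ : Measure Ω) →
      ∀ a : Fin n → Fin n → Ω → ℂ,
        (∀ i j, Measurable (a i j)) →
        iIndepFun (fun q : Fin n × Fin n => a q.1 q.2) ℙ →
        (∀ i j, ∫⁻ ω, (‖a i j ω‖₊ : ENNReal) ^ 2 ∂ℙ ≤ ENNReal.ofReal K) →
        ∀ i₀ j₀ : Fin n, ℙ {ω | a i₀ j₀ ω = 0} = ENNReal.ofReal P →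
        ∀ l : ℝ, 0 < l → ∀ t : ℝ, 0 < t →
          ∃ M : Matrix (Fin n) (Fin n) ℂ, opNorm M = t ∧
            ENNReal.ofReal (0.99 * P) ≤
              ℙ {ω | lsv (M + l • Matrix.of fun i j => a i j ω) ≤
                  C * l ^ 2 * (n : ℝ) ^ (3 / 2 : ℝ) / t} := by
  refine ⟨200 * K / P, by positivity, ?_⟩
  intro n hn Ω _ _ a ha _ hmom i₀ j₀ hzero l _ t ht
  have : Nontrivial (Fin n) := Fin.nontrivial_iff_two_le.mpr hn
  refine ⟨scaledPartialPerm t i₀ j₀,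
    by rw [opNorm_eq_l2_opNorm, l2_opNorm_scaledPartialPerm ht.le], ?_⟩
  have hn0 : (0 : ℝ) < n := by positivity
  set c := √(200 * K / P)
  have hc2 : c ^ 2 = 200 * K / P := Real.sq_sqrt (by positivity)
  have hcol := measure_le_norm_toLp_le (fun i => (ha i j₀).aestronglyMeasurable)
    (fun i => hmom i j₀) (show 0 < c * √n by positivity)
  have hmat := measure_le_norm_toLp_le (f := fun q : Fin n × Fin n => a q.1 q.2)
    (fun q => (ha q.1 q.2).aestronglyMeasurable) (fun q => hmom q.1 q.2)
    (show 0 < c * n by positivity)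
  rw [mul_pow, hc2, Real.sq_sqrt hn0.le, Fintype.card_fin] at hcol
  rw [mul_pow, hc2, Fintype.card_prod, Fintype.card_fin] at hmat
  refine le_trans ?_ <| (ofReal_sub_sub_le_measure_sdiff_union hzero (by positivity)
    (by positivity) hcol hmat).trans <| measure_mono ?_
  · gcongr
    field_simp
    push_cast
    linarith
  · rintro ω ⟨h0, hω⟩
    simp only [Set.mem_union, not_or, Set.mem_ofPred_eq, not_le] at hω
    rw [← hc2]
    exact lsv_scaledPartialPerm_add_smul_le_rpow ht l h0 hω.1.le hω.2.le
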